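/- Let J = ⟨x1 x2⁴, x2³ x3, x2² x3², x2 x3³, x3⁴ x1⟩ ⊆ K[x1,x2,x3]. Then the minimal primary decomposition of J is J = ⟨x1, x2⟩ ∩ ⟨x1, x3⟩ ∩ ⟨x2⁴, x2³ x3, x2² x3², x2 x3³, x3⁴⟩, and J^{(s)} = J^s for all s ≥ 1, i.e., J is a Simis ideal. -/

import Mathlib

set_option synthInstance.maxHeartbeats 1000000
set_option maxHeartbeats 1000000

open MvPolynomial

section Defs

variable {K : Type*} [Field K] {σ : Type*}

/-- `I` is a monomial ideal. -/
def IsMonomialIdeal (I : Ideal (MvPolynomial σ K)) : Prop :=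
  ∃ A : Set (σ →₀ ℕ), I = Ideal.span ((fun a => (monomial a (1 : K) : MvPolynomial σ K)) '' A)

/-- Exponent vectors of the minimal monomial generators of `I`. -/
def minGens (I : Ideal (MvPolynomial σ K)) : Set (σ →₀ ℕ) :=
  {a | (monomial a (1 : K) : MvPolynomial σ K) ∈ I ∧
    ∀ b : σ →₀ ℕ, (monomial b (1 : K) : MvPolynomial σ K) ∈ I → b ≤ a → b = a}

/-- A support-2 monomial ideal: every minimal monomial generator is supported
on exactly two variables. -/
def IsSupportTwo (I : Ideal (MvPolynomial σ K)) : Prop :=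
  ∀ a ∈ minGens I, a.support.card = 2

variable [DecidableEq σ]

/-- Minimal monomial generators of `I` supported on `{i, j}`. -/
def supportedOn (I : Ideal (MvPolynomial σ K)) (i j : σ) : Set (σ →₀ ℕ) :=
  {a | a ∈ minGens I ∧ a.support = {i, j}}

/-- `ν_{i,j}`: the minimum exponent of `x_i` among the minimal generators of `I`
supported on `{i, j}`. -/
noncomputable def nuExp (I : Ideal (MvPolynomial σ K)) (i j : σ) : ℕ :=
  sInf ((fun a => a i) '' supportedOn I i j)

/-- `μ_{i,j}`: the maximum exponent of `x_i` among the minimal generators of `I`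
supported on `{i, j}`. -/
noncomputable def muExp (I : Ideal (MvPolynomial σ K)) (i j : σ) : ℕ :=
  sSup ((fun a => a i) '' supportedOn I i j)

/-- The underlying simple graph `G(I)` of a support-2 monomial ideal. -/
def underGraph (I : Ideal (MvPolynomial σ K)) : SimpleGraph σ where
  Adj i j := i ≠ j ∧ (supportedOn I i j).Nonempty
  symm := ⟨by
    rintro i j ⟨hij, a, hmin, hs⟩
    exact ⟨hij.symm, a, hmin, by rw [hs, Finset.pair_comm]⟩⟩
  loopless := ⟨fun i h => h.1 rfl⟩

end Defs

section Symbolic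

variable {R : Type*} [CommRing R]

/-- The component of `I` at a prime `P`, namely `I S_P ∩ S`. -/
noncomputable def localizedComponent (I P : Ideal R) (hP : P.IsPrime) : Ideal R :=
  letI := hP
  (I.map (algebraMap R (Localization.AtPrime P))).comap
    (algebraMap R (Localization.AtPrime P))

/-- The `s`-th symbolic power `I^{(s)} = ⋂_{P ∈ MinAss(I)} (I^s S_P ∩ S)`. -/
noncomputable def symbolicPower (I : Ideal R) (s : ℕ) : Ideal R :=
  ⨅ P : I.minimalPrimes, localizedComponent (I ^ s) P.1 P.2.1.1

/-- A Simis ideal: `I^{(s)} = I^s` for all `s ≥ 1`. -/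
def IsSimis (I : Ideal R) : Prop := ∀ s : ℕ, 1 ≤ s → symbolicPower I s = I ^ s

/-- `I` has no embedded associated primes. -/
def NoEmbeddedPrimes (I : Ideal R) : Prop :=
  ∀ P ∈ associatedPrimes R (R ⧸ I), P ∈ I.minimalPrimes

end Symbolic

section Decomp

variable {K : Type*} [Field K] {σ : Type*}

/-- An irreducible monomial ideal: generated by pure powers of variables. -/
def IsIrredMonomialIdeal (Q : Ideal (MvPolynomial σ K)) : Prop :=
  ∃ (t : Finset σ) (e : σ → ℕ), (∀ i ∈ t, 1 ≤ e i) ∧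
    Q = Ideal.span ((fun i => (X i : MvPolynomial σ K) ^ e i) '' t)

/-- `I` has a minimal (irredundant, distinct radicals) irreducible decomposition. -/
def HasMinimalIrredDecomp (I : Ideal (MvPolynomial σ K)) : Prop :=
  ∃ (r : ℕ) (Q : Fin r → Ideal (MvPolynomial σ K)),
    (∀ k, IsIrredMonomialIdeal (Q k)) ∧ I = ⨅ k, Q k ∧
    (∀ k, (⨅ l ∈ ({k}ᶜ : Set (Fin r)), Q l) ≠ I) ∧
    (∀ k l, k ≠ l → (Q k).radical ≠ (Q l).radical)

/-- The ideal obtained from `J` by the standard linear weighting `x_i ↦ x_i^{d_i}`. -/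
noncomputable def weightedIdeal (d : σ → ℕ) (J : Ideal (MvPolynomial σ K)) : Ideal (MvPolynomial σ K) :=
  Ideal.span {m | ∃ a ∈ minGens J, ∃ b : σ →₀ ℕ,
    (∀ i, b i = d i * a i) ∧ m = (monomial b (1 : K) : MvPolynomial σ K)}

/-- `I` has a standard linear weighting: there are `d_i ≥ 1` such that every
minimal generator supported on `{i,j}` is `x_i^{d_i} x_j^{d_j}`. -/
def HasStdWeighting (I : Ideal (MvPolynomial σ K)) : Prop :=
  ∃ d : σ → ℕ, (∀ i, 1 ≤ d i) ∧ ∀ a ∈ minGens I, ∀ i ∈ a.support, a i = d i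

variable (K) in
/-- The edge ideal of a simple graph. -/
noncomputable def edgeIdeal (G : SimpleGraph σ) : Ideal (MvPolynomial σ K) :=
  Ideal.span {m | ∃ i j, G.Adj i j ∧ m = (X i * X j : MvPolynomial σ K)}

end Decomp

section Graph

variable {σ : Type*}

/-- A vertex cover of a simple graph. -/
def IsVertexCover (G : SimpleGraph σ) (C : Set σ) : Prop :=
  ∀ ⦃i j⦄, G.Adj i j → i ∈ C ∨ j ∈ C

/-- A minimal vertex cover of a simple graph. -/
def IsMinimalVertexCover (G : SimpleGraph σ) (C : Set σ) : Prop :=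
  IsVertexCover G C ∧ ∀ D ⊆ C, IsVertexCover G D → D = C

end Graph

section CM

variable {K : Type*} [Field K] {σ : Type*}

/-- The depth of `S/I` with respect to the irrelevant maximal ideal
`⟨x_1, …, x_n⟩`: the supremum of lengths of regular sequences on `S/I`
consisting of elements of that ideal. -/
noncomputable def quotDepth (I : Ideal (MvPolynomial σ K)) : ℕ∞ :=
  sSup {n : ℕ∞ | ∃ rs : List (MvPolynomial σ K), (rs.length : ℕ∞) = n ∧
    (∀ r ∈ rs, r ∈ Ideal.span (Set.range (X : σ → MvPolynomial σ K))) ∧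
    RingTheory.Sequence.IsRegular (MvPolynomial σ K ⧸ I)
      (rs.map (Ideal.Quotient.mk I))}

/-- `S/I` is Cohen–Macaulay: depth equals Krull dimension. -/
def IsCohenMacaulayQuot (I : Ideal (MvPolynomial σ K)) : Prop :=
  (quotDepth I : WithBot ℕ∞) = ringKrullDim (MvPolynomial σ K ⧸ I)

/-- The height of a prime ideal, as the Krull dimension of the localization. -/
noncomputable def primeHeight' {R : Type*} [CommRing R] (P : Ideal R) (hP : P.IsPrime) :
    WithBot ℕ∞ :=
  letI := hP
  ringKrullDim (Localization.AtPrime P)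

/-- `I` is unmixed: all associated primes of `S/I` have the same height. -/
def IsUnmixed {R : Type*} [CommRing R] (I : Ideal R) : Prop :=
  ∀ P, ∀ hP : P ∈ associatedPrimes R (R ⧸ I), ∀ Q, ∀ hQ : Q ∈ associatedPrimes R (R ⧸ I),
    primeHeight' P hP.1 = primeHeight' Q hQ.1

end CM

/-!
Write `P T = ⟨X i : i ∈ T⟩`, so that `Q1 = P {0, 1}`, `Q2 = P {0, 2}` and `Q3 = P {1, 2} ^ 4`.
A polynomial lies in `P T ^ n` iff each of its monomials has degree at least `n` in the variables
of `T`. That degree is the weighted order of the polynomial viewed as a power series, which is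
additive on products; hence `P T` is prime and its powers are primary, and the remaining
inequalities between the ideals are witnessed by powers of single variables.

So `Q1^s ⊓ Q2^s ⊓ Q3^s` is spanned by the monomials `X 0 ^ a * X 1 ^ b * X 2 ^ c` with
`a + b ≥ s`, `a + c ≥ s` and `b + c ≥ 4 s`, and each of them lies in `J ^ s` by induction on `s`:
split off the generator `X 2 ^ 4 * X 0` if `b ≤ s`, `X 0 * X 1 ^ 4` if `c ≤ s`, and otherwise a
generator `X 1 ^ p * X 2 ^ (4 - p)` with `1 ≤ p ≤ 3` that leaves both `b` and `c` at least `s`.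
-/

open Finsupp

namespace MvPowerSeries

variable {σ R : Type*} [CommRing R] {w : σ → ℕ}

@[simp]
theorem weightedOrder_pow [IsDomain R] (f : MvPowerSeries σ R) (k : ℕ) :
    (f ^ k).weightedOrder w = k • f.weightedOrder w := by
  induction k with
  | zero => simp [weightedOrder_one]
  | succ k ih => rw [pow_succ, weightedOrder_mul, ih, succ_nsmul]

@[simp]
theorem weightedOrder_X [Nontrivial R] (i : σ) :
    (X i : MvPowerSeries σ R).weightedOrder w = w i := by
  rw [X, weightedOrder_monomial_of_ne_zero w one_ne_zero,
    weight_single, smul_eq_mul, one_mul]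

end MvPowerSeries

namespace MvPolynomial

variable {σ R : Type*}

theorem mem_ideal_of_forall_monomial_mem [CommSemiring R] {I : Ideal (MvPolynomial σ R)}
    {p : MvPolynomial σ R} (h : ∀ d ∈ p.support, monomial d 1 ∈ I) : p ∈ I := by
  rw [p.as_sum]
  refine Ideal.sum_mem _ fun d hd => ?_
  rw [← mul_one (coeff d p), ← C_mul_monomial]
  exact I.mul_mem_left _ (h d hd)

theorem weight_indicator_one_eq_sum (T : Set σ) [DecidablePred (· ∈ T)] (d : σ →₀ ℕ) :
    weight (T.indicator 1) d = ∑ i ∈ d.support with i ∈ T, d i := by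
  rw [weight_apply, Finsupp.sum, Finset.sum_filter]
  refine Finset.sum_congr rfl fun i _ => ?_
  by_cases hi : i ∈ T <;> simp [hi]

theorem weight_indicator_pair {i j : σ} (hij : i ≠ j) (d : σ →₀ ℕ) :
    weight (({i, j} : Set σ).indicator 1) d = d i + d j := by
  induction d using Finsupp.induction_linear with
  | zero => simp
  | add d e hd he => simp only [map_add, hd, he, Finsupp.add_apply]; ring
  | single k c =>
    rw [weight_single]
    by_cases hki : k = i
    · subst hki; simp [hij]
    · by_cases hkj : k = j
      · subst hkj; simp [Ne.symm hij]
      · simp [Set.indicator, hki, hkj, Ne.symm hki, Ne.symm hkj]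

variable [CommRing R]

theorem monomial_one_eq_X_pow_mul_X_pow_mul_X_pow (d : Fin 3 →₀ ℕ) :
    (monomial d 1 : MvPolynomial (Fin 3) R) = X 0 ^ d 0 * X 1 ^ d 1 * X 2 ^ d 2 := by
  rw [monomial_eq, C_1, one_mul, Finsupp.prod_fintype _ _ fun _ => pow_zero _,
    Fin.prod_univ_three]

variable (R) in
noncomputable def weightedOrderIdeal (w : σ → ℕ) (n : ℕ) : Ideal (MvPolynomial σ R) :=
  restrictSupportIdeal R {d | n ≤ weight w d} fun d e hde (hd : n ≤ weight w d) => by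
    obtain ⟨c, rfl⟩ := le_iff_exists_add.mp hde
    exact hd.trans (by simp)

variable {w : σ → ℕ} {m n : ℕ}

theorem mem_weightedOrderIdeal {p : MvPolynomial σ R} :
    p ∈ weightedOrderIdeal R w n ↔ ∀ d ∈ p.support, n ≤ weight w d :=
  Iff.rfl

theorem weightedOrderIdeal_mul_le :
    weightedOrderIdeal R w m * weightedOrderIdeal R w n ≤ weightedOrderIdeal R w (m + n) := by
  classical
  refine Ideal.mul_le.2 fun p hp q hq => mem_weightedOrderIdeal.2 fun d hd => ?_
  obtain ⟨a, ha, b, hb, rfl⟩ := Finset.mem_add.1 (support_mul p q hd)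
  rw [map_add]
  exact add_le_add (mem_weightedOrderIdeal.1 hp a ha) (mem_weightedOrderIdeal.1 hq b hb)

theorem mem_weightedOrderIdeal_iff_le_weightedOrder {p : MvPolynomial σ R} :
    p ∈ weightedOrderIdeal R w n ↔ n ≤ (p : MvPowerSeries σ R).weightedOrder w := by
  rw [mem_weightedOrderIdeal]
  refine ⟨fun hp => MvPowerSeries.nat_le_weightedOrder w fun d hd => ?_, fun hp d hd => ?_⟩
  · rw [coeff_coe, ← notMem_support_iff]
    exact fun hmem => (hd.trans_le (hp d hmem)).false
  · have := MvPowerSeries.weightedOrder_le w (f := (p : MvPowerSeries σ R)) (d := d)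
      (by rwa [coeff_coe, ← mem_support_iff])
    exact_mod_cast hp.trans this

theorem one_notMem_weightedOrderIdeal [Nontrivial R] (hn : n ≠ 0) :
    (1 : MvPolynomial σ R) ∉ weightedOrderIdeal R w n := fun h => by
  simpa [Nat.pos_iff_ne_zero, hn] using mem_weightedOrderIdeal.1 h 0 (by simp)

theorem isPrime_weightedOrderIdeal_one [IsDomain R] : (weightedOrderIdeal R w 1).IsPrime := by
  refine ⟨(Ideal.ne_top_iff_one _).2 (one_notMem_weightedOrderIdeal one_ne_zero),
    fun {p q} hpq => ?_⟩
  simp only [mem_weightedOrderIdeal_iff_le_weightedOrder, coe_mul,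
    MvPowerSeries.weightedOrder_mul, Nat.cast_one, Order.one_le_iff_ne_zero] at hpq ⊢
  by_contra! h
  simp_all

theorem isPrimary_weightedOrderIdeal [IsDomain R] (hn : n ≠ 0) :
    (weightedOrderIdeal R w n).IsPrimary := by
  refine Ideal.isPrimary_iff.2 ⟨(Ideal.ne_top_iff_one _).2 (one_notMem_weightedOrderIdeal hn),
    fun {p q} hpq => ?_⟩
  rw [mem_weightedOrderIdeal_iff_le_weightedOrder, coe_mul,
    MvPowerSeries.weightedOrder_mul] at hpq
  by_cases hq : (q : MvPowerSeries σ R).weightedOrder w = 0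
  · left
    rw [mem_weightedOrderIdeal_iff_le_weightedOrder]
    simpa [hq] using hpq
  · right
    refine ⟨n, mem_weightedOrderIdeal_iff_le_weightedOrder.2 ?_⟩
    rw [coe_pow]
    calc (n : ℕ∞) = n • 1 := by simp
      _ ≤ n • (q : MvPowerSeries σ R).weightedOrder w :=
        nsmul_le_nsmul_right (Order.one_le_iff_ne_zero.2 hq) n
      _ ≤ _ := MvPowerSeries.le_weightedOrder_pow w n

theorem span_X_image_pow_eq (T : Set σ) (n : ℕ) :
    Ideal.span (X '' T) ^ n = weightedOrderIdeal R (T.indicator 1) n := by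
  classical
  refine le_antisymm ?_ fun p hp => mem_ideal_of_forall_monomial_mem fun d hd => ?_
  · have h1 : Ideal.span (X '' T) ≤ weightedOrderIdeal R (T.indicator 1) 1 := by
      rw [Ideal.span_le]
      rintro _ ⟨i, hi, rfl⟩
      refine mem_weightedOrderIdeal.2 fun d hd => ?_
      rw [Finset.mem_singleton.1 (support_monomial_subset hd), weight_single]
      simp [hi]
    induction n with
    | zero => exact fun p _ => mem_weightedOrderIdeal.2 fun d _ => Nat.zero_le _
    | succ n ih =>
      rw [pow_succ]
      exact (Ideal.mul_mono ih h1).trans weightedOrderIdeal_mul_le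
  · have hprod : ∏ i ∈ d.support with i ∈ T, (X i : MvPolynomial σ R) ^ d i
        ∈ Ideal.span (X '' T) ^ n := by
      refine Ideal.pow_le_pow_right
        ((weight_indicator_one_eq_sum T d).symm ▸ mem_weightedOrderIdeal.1 hp d hd) ?_
      rw [← Finset.prod_pow_eq_pow_sum]
      exact Ideal.prod_mem_prod fun i hi =>
        Ideal.pow_mem_pow (Ideal.subset_span (Set.mem_image_of_mem X (Finset.mem_filter.1 hi).2)) _
    rw [monomial_eq, C_1, one_mul, Finsupp.prod,
      ← Finset.prod_filter_mul_prod_filter_not _ (· ∈ T)]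
    exact Ideal.mul_mem_right _ _ hprod

theorem mem_span_X_image_pow_iff (T : Set σ) {p : MvPolynomial σ R} :
    p ∈ Ideal.span (X '' T) ^ n ↔ n ≤ (p : MvPowerSeries σ R).weightedOrder (T.indicator 1) := by
  rw [span_X_image_pow_eq, mem_weightedOrderIdeal_iff_le_weightedOrder]

theorem mem_span_X_image_iff (T : Set σ) {p : MvPolynomial σ R} :
    p ∈ Ideal.span (X '' T) ↔ 1 ≤ (p : MvPowerSeries σ R).weightedOrder (T.indicator 1) := by
  simpa using mem_span_X_image_pow_iff (n := 1) T

theorem isPrime_span_X_image [IsDomain R] (T : Set σ) :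
    (Ideal.span (X '' T) : Ideal (MvPolynomial σ R)).IsPrime := by
  rw [← pow_one (Ideal.span _), span_X_image_pow_eq]
  exact isPrime_weightedOrderIdeal_one

theorem isPrimary_span_X_image_pow [IsDomain R] (T : Set σ) (hn : n ≠ 0) :
    (Ideal.span (X '' T) ^ n : Ideal (MvPolynomial σ R)).IsPrimary := by
  rw [span_X_image_pow_eq]
  exact isPrimary_weightedOrderIdeal hn

theorem X_pow_notMem_span_X_image_pow [Nontrivial R] {T : Set σ} {i : σ} (hi : i ∉ T)
    (hn : n ≠ 0) (k : ℕ) : (X i ^ k : MvPolynomial σ R) ∉ Ideal.span (X '' T) ^ n := by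
  rw [span_X_image_pow_eq, mem_weightedOrderIdeal, support_X_pow]
  intro h
  simpa [weight_single, hi, Nat.pos_iff_ne_zero, hn] using h _ (Finset.mem_singleton_self _)

theorem ne_of_X_pow_mem [Nontrivial R] {I J : Ideal (MvPolynomial σ R)} {T : Set σ} {i : σ}
    {k : ℕ} (hi : i ∉ T) (hn : n ≠ 0) (hJ : J ≤ Ideal.span (X '' T) ^ n) (hI : X i ^ k ∈ I) :
    I ≠ J := by
  rintro rfl
  exact X_pow_notMem_span_X_image_pow hi hn k (hJ hI)

end MvPolynomial

namespace SimisExample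

variable {K : Type*} [Field K]

noncomputable def J : Ideal (MvPolynomial (Fin 3) K) :=
  Ideal.span {X 0 * X 1 ^ 4, X 1 ^ 3 * X 2, X 1 ^ 2 * X 2 ^ 2, X 1 * X 2 ^ 3, X 2 ^ 4 * X 0}

theorem X_pow_mul_mem_J_pow (s : ℕ) {a b c : ℕ} (h01 : s ≤ a + b) (h02 : s ≤ a + c)
    (h12 : 4 * s ≤ b + c) : (X 0 ^ a * X 1 ^ b * X 2 ^ c : MvPolynomial (Fin 3) K) ∈ J ^ s := by
  induction s generalizing a b c with
  | zero => simp
  | succ s ih =>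
    have step : ∀ {a b c : ℕ} {g : MvPolynomial (Fin 3) K}, g ∈ J → s ≤ a + b → s ≤ a + c →
        4 * s ≤ b + c → X 0 ^ a * X 1 ^ b * X 2 ^ c * g ∈ J ^ (s + 1) :=
      fun hg h01 h02 h12 => by
        rw [pow_succ]; exact Ideal.mul_mem_mul (ih h01 h02 h12) hg
    rcases le_or_gt b s with hb | hb
    · obtain ⟨a, rfl⟩ : ∃ a', a = a' + 1 := ⟨a - 1, by omega⟩
      obtain ⟨c, rfl⟩ : ∃ c', c = c' + 4 := ⟨c - 4, by omega⟩
      rw [show X 0 ^ (a + 1) * X 1 ^ b * X 2 ^ (c + 4) =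
        X 0 ^ a * X 1 ^ b * X 2 ^ c * (X 2 ^ 4 * X 0 : MvPolynomial (Fin 3) K) by ring]
      exact step (Ideal.subset_span (by simp)) (by omega) (by omega) (by omega)
    rcases le_or_gt c s with hc | hc
    · obtain ⟨a, rfl⟩ : ∃ a', a = a' + 1 := ⟨a - 1, by omega⟩
      obtain ⟨b, rfl⟩ : ∃ b', b = b' + 4 := ⟨b - 4, by omega⟩
      rw [show X 0 ^ (a + 1) * X 1 ^ (b + 4) * X 2 ^ c =
        X 0 ^ a * X 1 ^ b * X 2 ^ c * (X 0 * X 1 ^ 4 : MvPolynomial (Fin 3) K) by ring]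
      exact step (Ideal.subset_span (by simp)) (by omega) (by omega) (by omega)
    obtain ⟨p, hp1, hp3, hpb, hpc⟩ : ∃ p, 1 ≤ p ∧ p ≤ 3 ∧ s + p ≤ b ∧ s + 4 ≤ c + p :=
      ⟨min 3 (b - s), by omega, by omega, by omega, by omega⟩
    obtain ⟨b, rfl⟩ : ∃ b', b = b' + p := ⟨b - p, by omega⟩
    obtain ⟨c, rfl⟩ : ∃ c', c = c' + (4 - p) := ⟨c - (4 - p), by omega⟩
    have hgen : (X 1 ^ p * X 2 ^ (4 - p) : MvPolynomial (Fin 3) K) ∈ J := by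
      interval_cases p <;> exact Ideal.subset_span (by simp)
    rw [show X 0 ^ a * X 1 ^ (b + p) * X 2 ^ (c + (4 - p)) =
      X 0 ^ a * X 1 ^ b * X 2 ^ c * (X 1 ^ p * X 2 ^ (4 - p) : MvPolynomial (Fin 3) K) by ring]
    exact step hgen (by omega) (by omega) (by omega)

theorem span_X_image_pow_four :
    Ideal.span (X '' {1, 2}) ^ 4 = (Ideal.span {X 1 ^ 4, X 1 ^ 3 * X 2, X 1 ^ 2 * X 2 ^ 2,
      X 1 * X 2 ^ 3, X 2 ^ 4} : Ideal (MvPolynomial (Fin 3) K)) := by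
  refine le_antisymm (fun p hp => mem_ideal_of_forall_monomial_mem fun d hd => ?_) ?_
  · rw [span_X_image_pow_eq, mem_weightedOrderIdeal] at hp
    have hd12 := hp d hd
    rw [weight_indicator_pair (by decide)] at hd12
    rw [monomial_one_eq_X_pow_mul_X_pow_mul_X_pow]
    rcases le_or_gt 4 (d 1) with hb | hb
    · have hdvd : (X 1 ^ 4 : MvPolynomial (Fin 3) K) ∣ X 0 ^ d 0 * X 1 ^ d 1 * X 2 ^ d 2 :=
        ((pow_dvd_pow _ hb).mul_left _).mul_right _
      exact Ideal.mem_of_dvd _ hdvd (Ideal.subset_span (by simp))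
    · have hdvd : (X 1 ^ d 1 * X 2 ^ (4 - d 1) : MvPolynomial (Fin 3) K) ∣
          X 0 ^ d 0 * X 1 ^ d 1 * X 2 ^ d 2 :=
        mul_dvd_mul (dvd_mul_left _ _) (pow_dvd_pow _ (by omega))
      refine Ideal.mem_of_dvd _ hdvd ?_
      interval_cases d 1 <;> exact Ideal.subset_span (by simp)
  · rw [Ideal.span_le]
    simp [Set.insert_subset_iff, mem_span_X_image_pow_iff, MvPowerSeries.weightedOrder_mul]
    norm_num

theorem J_le_inf :
    (J : Ideal (MvPolynomial (Fin 3) K)) ≤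
      Ideal.span (X '' {0, 1}) ⊓ Ideal.span (X '' {0, 2}) ⊓ Ideal.span (X '' {1, 2}) ^ 4 := by
  rw [J, Ideal.span_le]
  simp [Set.insert_subset_iff, mem_span_X_image_iff, mem_span_X_image_pow_iff,
    MvPowerSeries.weightedOrder_mul]
  norm_num

theorem inf_pow_eq_J_pow (s : ℕ) :
    Ideal.span (X '' {0, 1}) ^ s ⊓ Ideal.span (X '' {0, 2}) ^ s ⊓
      (Ideal.span (X '' {1, 2}) ^ 4) ^ s = (J : Ideal (MvPolynomial (Fin 3) K)) ^ s := by
  refine le_antisymm ?_ ?_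
  · intro p hp
    obtain ⟨⟨h01, h02⟩, h12⟩ := Submodule.mem_inf.1 hp |>.imp_left Submodule.mem_inf.1
    rw [← pow_mul] at h12
    rw [span_X_image_pow_eq, mem_weightedOrderIdeal] at h01 h02 h12
    refine mem_ideal_of_forall_monomial_mem fun d hd => ?_
    have hd01 := h01 d hd
    have hd02 := h02 d hd
    have hd12 := h12 d hd
    rw [weight_indicator_pair (by decide)] at hd01 hd02 hd12
    rw [monomial_one_eq_X_pow_mul_X_pow_mul_X_pow]
    exact X_pow_mul_mem_J_pow s hd01 hd02 (by omega)
  · have hJ := J_le_inf (K := K)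
    exact le_inf (le_inf (Ideal.pow_right_mono (hJ.trans (inf_le_left.trans inf_le_left)) s)
      (Ideal.pow_right_mono (hJ.trans (inf_le_left.trans inf_le_right)) s))
      (Ideal.pow_right_mono (hJ.trans inf_le_right) s)

end SimisExample

open SimisExample

theorem stmt12 {K : Type*} [Field K]
    (J Q1 Q2 Q3 : Ideal (MvPolynomial (Fin 3) K))
    (hJ : J = Ideal.span {X 0 * X 1 ^ 4, X 1 ^ 3 * X 2, X 1 ^ 2 * X 2 ^ 2,
      X 1 * X 2 ^ 3, X 2 ^ 4 * X 0})
    (hQ1 : Q1 = Ideal.span {X 0, X 1})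
    (hQ2 : Q2 = Ideal.span {X 0, X 2})
    (hQ3 : Q3 = Ideal.span {X 1 ^ 4, X 1 ^ 3 * X 2, X 1 ^ 2 * X 2 ^ 2,
      X 1 * X 2 ^ 3, X 2 ^ 4}) :
    J = Q1 ⊓ Q2 ⊓ Q3 ∧
    Q1.IsPrimary ∧ Q2.IsPrimary ∧ Q3.IsPrimary ∧
    Q1.radical ≠ Q2.radical ∧ Q1.radical ≠ Q3.radical ∧ Q2.radical ≠ Q3.radical ∧
    Q1 ⊓ Q2 ≠ J ∧ Q1 ⊓ Q3 ≠ J ∧ Q2 ⊓ Q3 ≠ J ∧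
    (∀ s : ℕ, 1 ≤ s → Q1 ^ s ⊓ Q2 ^ s ⊓ Q3 ^ s = J ^ s) := by
  rw [← Set.image_pair] at hQ1 hQ2
  rw [← span_X_image_pow_four] at hQ3
  subst hJ hQ1 hQ2 hQ3
  have hP01 := isPrime_span_X_image (R := K) ({0, 1} : Set (Fin 3))
  have hP02 := isPrime_span_X_image (R := K) ({0, 2} : Set (Fin 3))
  have hP12 := isPrime_span_X_image (R := K) ({1, 2} : Set (Fin 3))
  have hJ := J_le_inf (K := K)
  have hdecomp := inf_pow_eq_J_pow (K := K) 1
  simp only [pow_one] at hdecomp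
  rw [hP01.radical, hP02.radical, Ideal.radical_pow _ four_ne_zero, hP12.radical]
  refine ⟨hdecomp.symm, hP01.isPrimary, hP02.isPrimary,
    isPrimary_span_X_image_pow _ four_ne_zero, ?_, ?_, ?_, ?_, ?_, ?_,
    fun s _ => inf_pow_eq_J_pow s⟩
  · exact ne_of_X_pow_mem (i := 1) (k := 1) (by simp) one_ne_zero (pow_one _).ge
      (by simp [mem_span_X_image_iff])
  · exact ne_of_X_pow_mem (i := 0) (k := 1) (by simp) one_ne_zero (pow_one _).ge
      (by simp [mem_span_X_image_iff])
  · exact ne_of_X_pow_mem (i := 0) (k := 1) (by simp) one_ne_zero (pow_one _).ge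
      (by simp [mem_span_X_image_iff])
  · exact ne_of_X_pow_mem (i := 0) (k := 1) (by simp) four_ne_zero (hJ.trans inf_le_right)
      (by simp [mem_span_X_image_iff])
  · exact ne_of_X_pow_mem (i := 1) (k := 4) (by simp) one_ne_zero
      ((hJ.trans (inf_le_left.trans inf_le_right)).trans (pow_one _).ge)
      (by simp [mem_span_X_image_iff, mem_span_X_image_pow_iff])
  · exact ne_of_X_pow_mem (i := 2) (k := 4) (by simp) one_ne_zero
      ((hJ.trans (inf_le_left.trans inf_le_left)).trans (pow_one _).ge)
      (by simp [mem_span_X_image_iff, mem_span_X_image_pow_iff])
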